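/- For every d ∈ ℕ with d ≥ 7, the complete binary tree 𝔅_d of depth d satisfies ffn(𝔅_d) ≤ ⌈d/2⌉ + 1. -/
import Mathlib


open scoped Classical
noncomputable section

variable {V : Type*}

/-- The neighbourhood of a set of vertices: all vertices outside `S` adjacent to some
vertex of `S`. -/
def nbhd [Fintype V] (G : SimpleGraph V) (S : Finset V) : Finset V :=
  Finset.univ.filter fun v => v ∉ S ∧ ∃ u ∈ S, G.Adj u v

/-- The burning sets of a strategy `F` (where `F i` is the firefighter set at time `i`):
`B 0 = V` and `B (t+1) = (B t \ F (t+1)) ∪ N(B t \ F (t+1))`. -/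
def burn [Fintype V] (G : SimpleGraph V) (F : ℕ → Finset V) : ℕ → Finset V
  | 0 => Finset.univ
  | t + 1 => (burn G F t \ F (t + 1)) ∪ nbhd G (burn G F t \ F (t + 1))

/-- `F` is a `T`-winning `m`-strategy for `G`. -/
def WinningStrategy [Fintype V] (G : SimpleGraph V) (m T : ℕ) (F : ℕ → Finset V) : Prop :=
  (∀ i, (F i).card ≤ m) ∧ burn G F T = ∅

/-- The firefighter number of `G`: the least `m` admitting a winning `m`-strategy. -/
def ffn [Fintype V] (G : SimpleGraph V) : ℕ :=
  sInf {m | ∃ T F, WinningStrategy G m T F}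


/-- The complete binary tree of depth `d`, with `2 ^ (d + 1) - 1` vertices in heap
indexing: vertex `a` (representing index `a + 1` in `1, ..., 2^(d+1) - 1`) is adjacent
to its children, the vertices of indices `2 (a + 1)` and `2 (a + 1) + 1`. -/
def completeBinaryTree (d : ℕ) : SimpleGraph (Fin (2 ^ (d + 1) - 1)) :=
  SimpleGraph.fromRel fun a b =>
    (b.val + 1 = 2 * (a.val + 1)) ∨ (b.val + 1 = 2 * (a.val + 1) + 1)

namespace BTreeFF

/-! ### Descendant relation on heap indices (1-based) -/

def desc (j r : ℕ) : Prop := ∃ k, j / 2 ^ k = r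

lemma desc_refl (r : ℕ) : desc r r := ⟨0, by simp⟩

lemma desc_le {j r : ℕ} (h : desc j r) : r ≤ j := by
  obtain ⟨k, rfl⟩ := h; exact Nat.div_le_self _ _

lemma div_pow_succ (j k : ℕ) : j / 2 ^ (k + 1) = (j / 2) / 2 ^ k := by
  rw [Nat.div_div_eq_div_mul, pow_succ']

lemma div_pow_succ' (j k : ℕ) : j / 2 ^ (k + 1) = (j / 2 ^ k) / 2 := by
  rw [Nat.div_div_eq_div_mul, pow_succ]

lemma desc_child {j r : ℕ} (h : desc j r) : desc (2 * j) r ∧ desc (2 * j + 1) r := by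
  obtain ⟨k, rfl⟩ := h
  constructor
  · exact ⟨k + 1, by rw [div_pow_succ]; congr 1; omega⟩
  · exact ⟨k + 1, by rw [div_pow_succ]; congr 1; omega⟩

lemma desc_up {j r : ℕ} (h : desc j r) (hne : j ≠ r) : desc (j / 2) r := by
  obtain ⟨k, hk⟩ := h
  cases k with
  | zero => simp at hk; omega
  | succ k => exact ⟨k, by rw [← div_pow_succ, hk]⟩

lemma desc_split {j r : ℕ} : desc j r ↔ j = r ∨ desc j (2 * r) ∨ desc j (2 * r + 1) := by
  constructor
  · rintro ⟨k, hk⟩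
    cases k with
    | zero => left; simpa using hk
    | succ k =>
      rw [div_pow_succ'] at hk
      have hm : j / 2 ^ k = 2 * r ∨ j / 2 ^ k = 2 * r + 1 := by omega
      rcases hm with hm | hm
      · exact Or.inr (Or.inl ⟨k, hm⟩)
      · exact Or.inr (Or.inr ⟨k, hm⟩)
  · rintro (rfl | ⟨k, hk⟩ | ⟨k, hk⟩)
    · exact desc_refl _
    · exact ⟨k + 1, by rw [div_pow_succ', hk]; omega⟩
    · exact ⟨k + 1, by rw [div_pow_succ', hk]; omega⟩

/-- Boundary of a full subtree: a neighbour (in heap adjacency) of a vertex of `T r`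
that is not itself in `T r` must be the parent of `r`. -/
lemma bdry1 {r j u : ℕ} (hr : 1 ≤ r) (hj : desc j r)
    (hadj : u = 2 * j ∨ u = 2 * j + 1 ∨ j = 2 * u ∨ j = 2 * u + 1)
    (hu : ¬ desc u r) : j = r ∧ u = r / 2 := by
  rcases hadj with rfl | rfl | hju | hju
  · exact absurd (desc_child hj).1 hu
  · exact absurd (desc_child hj).2 hu
  · by_cases hjr : j = r
    · subst hjr; exact ⟨rfl, by omega⟩
    · exact absurd (by have := desc_up hj hjr; rwa [show j / 2 = u by omega] at this) hu
  · by_cases hjr : j = r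
    · subst hjr; exact ⟨rfl, by omega⟩
    · exact absurd (by have := desc_up hj hjr; rwa [show j / 2 = u by omega] at this) hu

/-- Boundary of `{r} ∪ T (2r)`: an outside neighbour is the parent of `r` or `2r+1`. -/
lemma bdry2 {r j u : ℕ} (hr : 1 ≤ r) (hj : j = r ∨ desc j (2 * r))
    (hadj : u = 2 * j ∨ u = 2 * j + 1 ∨ j = 2 * u ∨ j = 2 * u + 1)
    (hu : ¬ (u = r ∨ desc u (2 * r))) : u = r / 2 ∨ u = 2 * r + 1 := by
  push_neg at hu
  rcases hj with rfl | hj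
  · rcases hadj with rfl | rfl | hju | hju
    · exact absurd (desc_refl _) hu.2
    · right; rfl
    · left; omega
    · left; omega
  · by_cases hud : desc u (2 * r)
    · exact absurd hud hu.2
    · obtain ⟨hj2, hu2⟩ := bdry1 (by omega) hj hadj hud
      exact absurd (by omega : u = r) hu.1

lemma desc_one {j : ℕ} (hj : 1 ≤ j) : desc j 1 := by
  induction j using Nat.strong_induction_on with
  | _ j ih =>
    rcases Nat.lt_or_ge j 2 with h | h
    · have : j = 1 := by omega
      subst this; exact desc_refl 1
    · obtain ⟨k, hk⟩ := ih (j / 2) (by omega) (by omega)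
      exact ⟨k + 1, by rw [div_pow_succ, hk]⟩



/-- The (at most singleton) set of vertices of `Fin (2^(d+1)-1)` with 1-based heap
index `j`. -/
def vmap (d j : ℕ) : Finset (Fin (2 ^ (d + 1) - 1)) :=
  Finset.univ.filter fun v => (v : ℕ) + 1 = j

lemma mem_vmap {d j : ℕ} {v : Fin (2 ^ (d + 1) - 1)} : v ∈ vmap d j ↔ (v : ℕ) + 1 = j := by
  simp [vmap]

lemma card_vmap (d j : ℕ) : (vmap d j).card ≤ 1 := by
  apply Finset.card_le_one.mpr
  intro a ha b hb
  rw [mem_vmap] at ha hb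
  exact Fin.ext (by omega)

/-! ### Lengths of the strategies -/

mutual
def Lw : ℕ → ℕ
  | 0 => 1
  | 1 => 3
  | h + 2 => 2 * Lw h + 2 + Ls (h + 1)
def Ls : ℕ → ℕ
  | 0 => 1
  | h + 1 => Lw h + 1 + Ls h
end

def pw : ℕ → ℕ
  | 0 => 1
  | 1 => 3
  | h + 2 => 2 * Lw h + 2

def ps : ℕ → ℕ
  | 0 => 1
  | h + 1 => Lw h + 1

lemma one_le_Lw (h : ℕ) : 1 ≤ Lw h := by
  match h with
  | 0 => simp only [Lw]; omega
  | 1 => simp only [Lw]; omega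
  | h + 2 => simp only [Lw]; omega

lemma one_le_Ls (h : ℕ) : 1 ≤ Ls h := by
  match h with
  | 0 => simp only [Ls]; omega
  | h + 1 => simp only [Ls]; omega

lemma pw_le_Lw (h : ℕ) : pw h ≤ Lw h := by
  match h with
  | 0 => simp only [pw, Lw]; omega
  | 1 => simp only [pw, Lw]; omega
  | h + 2 => simp only [pw, Lw]; omega

lemma one_le_pw (h : ℕ) : 1 ≤ pw h := by
  match h with
  | 0 => simp only [pw]; omega
  | 1 => simp only [pw]; omega
  | h + 2 => have := one_le_Lw h; simp only [pw]; omega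

lemma ps_le_Ls (h : ℕ) : ps h ≤ Ls h := by
  match h with
  | 0 => simp only [ps, Ls]; omega
  | h + 1 => have := one_le_Ls h; simp only [ps, Ls]; omega

lemma one_le_ps (h : ℕ) : 1 ≤ ps h := by
  match h with
  | 0 => simp only [ps]; omega
  | h + 1 => have := one_le_Lw h; simp only [ps]; omega

/-! ### The strategies -/

mutual
/-- "Weak" strategy clearing the height-`h` subtree rooted at heap index `r`. -/
def Fwf (d : ℕ) : ℕ → ℕ → ℕ → Finset (Fin (2 ^ (d + 1) - 1))
  | 0, r, _ => vmap d r
  | 1, r, i =>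
      if i = 0 then vmap d (2 * r) ∪ vmap d r
      else if i = 1 then vmap d (2 * r + 1) ∪ vmap d r
      else vmap d r
  | h + 2, r, i =>
      if i < Lw h then Fwf d h (4 * r) i ∪ vmap d (2 * r)
      else if i < 2 * Lw h then Fwf d h (4 * r + 1) (i - Lw h) ∪ vmap d (2 * r)
      else if i = 2 * Lw h then vmap d (2 * r) ∪ vmap d r
      else if i = 2 * Lw h + 1 then vmap d r ∪ vmap d (2 * r + 1)
      else Fsf d (h + 1) (2 * r + 1) (i - (2 * Lw h + 2))
/-- "Strong" strategy: root is kept covered at every step until it is cleared. -/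
def Fsf (d : ℕ) : ℕ → ℕ → ℕ → Finset (Fin (2 ^ (d + 1) - 1))
  | 0, r, _ => vmap d r
  | h + 1, r, i =>
      if i < Lw h then Fwf d h (2 * r) i ∪ vmap d r
      else if i = Lw h then vmap d r ∪ vmap d (2 * r + 1)
      else Fsf d h (2 * r + 1) (i - (Lw h + 1))
end

/-! ### Branch equations -/

section Branches
variable (d : ℕ)

lemma Fwf_p1 {h i : ℕ} (r : ℕ) (hi : i < Lw h) :
    Fwf d (h + 2) r i = Fwf d h (4 * r) i ∪ vmap d (2 * r) := by
  rw [Fwf, if_pos hi]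

lemma Fwf_p2 {h i : ℕ} (r : ℕ) (hi : i < Lw h) :
    Fwf d (h + 2) r (Lw h + i) = Fwf d h (4 * r + 1) i ∪ vmap d (2 * r) := by
  rw [Fwf, if_neg (by omega), if_pos (by omega), Nat.add_sub_cancel_left]

lemma Fwf_p3 {h : ℕ} (r : ℕ) :
    Fwf d (h + 2) r (2 * Lw h) = vmap d (2 * r) ∪ vmap d r := by
  have := one_le_Lw h
  rw [Fwf, if_neg (by omega), if_neg (by omega), if_pos rfl]

lemma Fwf_p4 {h : ℕ} (r : ℕ) :
    Fwf d (h + 2) r (2 * Lw h + 1) = vmap d r ∪ vmap d (2 * r + 1) := by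
  have := one_le_Lw h
  rw [Fwf, if_neg (by omega), if_neg (by omega), if_neg (by omega), if_pos rfl]

lemma Fwf_p5 {h : ℕ} (r i : ℕ) :
    Fwf d (h + 2) r (2 * Lw h + 2 + i) = Fsf d (h + 1) (2 * r + 1) i := by
  have := one_le_Lw h
  rw [Fwf, if_neg (by omega), if_neg (by omega), if_neg (by omega), if_neg (by omega),
    Nat.add_sub_cancel_left]

lemma Fsf_p1 {h i : ℕ} (r : ℕ) (hi : i < Lw h) :
    Fsf d (h + 1) r i = Fwf d h (2 * r) i ∪ vmap d r := by
  rw [Fsf, if_pos hi]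

lemma Fsf_p2 {h : ℕ} (r : ℕ) :
    Fsf d (h + 1) r (Lw h) = vmap d r ∪ vmap d (2 * r + 1) := by
  rw [Fsf, if_neg (by omega), if_pos rfl]

lemma Fsf_p3 {h : ℕ} (r i : ℕ) :
    Fsf d (h + 1) r (Lw h + 1 + i) = Fsf d h (2 * r + 1) i := by
  rw [Fsf, if_neg (by omega), if_neg (by omega), Nat.add_sub_cancel_left]

end Branches

/-- The root is covered by the strong strategy at every step before (and including)
the step where it is cleared. -/
lemma vmap_subset_Fsf (d : ℕ) : ∀ h r i, i + 1 ≤ ps h → vmap d r ⊆ Fsf d h r i := by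
  intro h r i hi
  match h with
  | 0 =>
    have : i = 0 := by simpa [ps] using hi
    subst this
    rw [Fsf]
  | h + 1 =>
    rw [ps] at hi
    rcases Nat.lt_or_ge i (Lw h) with h' | h'
    · rw [Fsf_p1 d r h']; exact Finset.subset_union_right
    · have : i = Lw h := by omega
      subst this
      rw [Fsf_p2]; exact Finset.subset_union_left

/-- Cardinality bounds for the strategy sets. -/
lemma card_strategies (d : ℕ) :
    ∀ h, (∀ r i, (Fwf d h r i).card ≤ (h + 1) / 2 + 1) ∧
         (∀ r i, (Fsf d h r i).card ≤ h / 2 + 2) := by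
  have cu : ∀ (a b : Finset (Fin (2 ^ (d+1) - 1))) (x y : ℕ),
      a.card ≤ x → b.card ≤ y → (a ∪ b).card ≤ x + y := by
    intro a b x y ha hb
    calc (a ∪ b).card ≤ a.card + b.card := Finset.card_union_le _ _
      _ ≤ x + y := by omega
  intro h
  induction h using Nat.strong_induction_on with
  | _ h ih =>
    match h with
    | 0 =>
      refine ⟨fun r i => ?_, fun r i => ?_⟩
      · rw [Fwf]; have := card_vmap d r; omega
      · rw [Fsf]; have := card_vmap d r; omega
    | 1 =>
      have ih0 := ih 0 (by omega)
      refine ⟨fun r i => ?_, fun r i => ?_⟩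
      · rw [Fwf]
        split_ifs
        · exact le_trans (cu _ _ 1 1 (card_vmap d _) (card_vmap d _)) (by omega)
        · exact le_trans (cu _ _ 1 1 (card_vmap d _) (card_vmap d _)) (by omega)
        · have := card_vmap d r; omega
      · rw [Fsf]
        split_ifs
        · exact le_trans (cu _ _ 1 1 (ih0.1 (2*r) i) (card_vmap d _)) (by omega)
        · exact le_trans (cu _ _ 1 1 (card_vmap d _) (card_vmap d _)) (by omega)
        · exact le_trans (ih0.2 (2*r+1) _) (by omega)
    | h + 2 =>
      have ihh := ih h (by omega)
      have ihh1 := ih (h+1) (by omega)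
      refine ⟨fun r i => ?_, fun r i => ?_⟩
      · rw [Fwf]
        split_ifs
        · exact le_trans (cu _ _ ((h+1)/2+1) 1 (ihh.1 (4*r) i) (card_vmap d _)) (by omega)
        · exact le_trans (cu _ _ ((h+1)/2+1) 1 (ihh.1 (4*r+1) _) (card_vmap d _)) (by omega)
        · exact le_trans (cu _ _ 1 1 (card_vmap d _) (card_vmap d _)) (by omega)
        · exact le_trans (cu _ _ 1 1 (card_vmap d _) (card_vmap d _)) (by omega)
        · exact le_trans (ihh1.2 (2*r+1) _) (by omega)
      · rw [Fsf]
        split_ifs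
        · exact le_trans (cu _ _ ((h+2)/2+1) 1 (ihh1.1 (2*r) i) (card_vmap d _)) (by omega)
        · exact le_trans (cu _ _ 1 1 (card_vmap d _) (card_vmap d _)) (by omega)
        · exact le_trans (ihh1.2 (2*r+1) _) (by omega)

/-- Heap index `j` is not burning at time `t`. -/
def clearN (d : ℕ) (F : ℕ → Finset (Fin (2 ^ (d + 1) - 1))) (t j : ℕ) : Prop :=
  ∀ v : Fin (2 ^ (d + 1) - 1), (v : ℕ) + 1 = j → v ∉ burn (completeBinaryTree d) F t

/-- Heap index `j` is covered at step `t + 1`: either a firefighter extinguishes it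
at step `t + 1`, or it was not burning at time `t`. -/
def covAt (d : ℕ) (F : ℕ → Finset (Fin (2 ^ (d + 1) - 1))) (t j : ℕ) : Prop :=
  ∀ u : Fin (2 ^ (d + 1) - 1), (u : ℕ) + 1 = j →
    (u ∈ F (t + 1) ∨ u ∉ burn (completeBinaryTree d) F t)

lemma covAt_of_big {d F t j} (hj : 2 ^ (d + 1) - 1 < j) : covAt d F t j := by
  intro u hu
  exact absurd hu (by have := u.isLt; omega)

lemma covAt_zero {d F t} : covAt d F t 0 := by
  intro u hu
  exact absurd hu (by omega)

lemma clearN_of_big {d F t j} (hj : 2 ^ (d + 1) - 1 < j) : clearN d F t j := by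
  intro u hu
  exact absurd hu (by have := u.isLt; omega)

lemma covAt_of_F {d F t j} (h : vmap d j ⊆ F (t + 1)) : covAt d F t j :=
  fun u hu => Or.inl (h (mem_vmap.mpr hu))

lemma covAt_of_clear {d F t j} (h : clearN d F t j) : covAt d F t j :=
  fun u hu => Or.inr (h u hu)

lemma adj_opts {d : ℕ} {u v : Fin (2 ^ (d + 1) - 1)} (h : (completeBinaryTree d).Adj u v) :
    (u : ℕ) + 1 = 2 * ((v : ℕ) + 1) ∨ (u : ℕ) + 1 = 2 * ((v : ℕ) + 1) + 1 ∨
    (v : ℕ) + 1 = 2 * ((u : ℕ) + 1) ∨ (v : ℕ) + 1 = 2 * ((u : ℕ) + 1) + 1 := by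
  rw [completeBinaryTree, SimpleGraph.fromRel_adj] at h
  tauto

lemma burn_succ_not_mem {d : ℕ} {F : ℕ → Finset (Fin (2 ^ (d + 1) - 1))} {t : ℕ}
    {v : Fin (2 ^ (d + 1) - 1)}
    (hself : v ∈ F (t + 1) ∨ v ∉ burn (completeBinaryTree d) F t)
    (hnb : ∀ u, (completeBinaryTree d).Adj u v →
      u ∈ F (t + 1) ∨ u ∉ burn (completeBinaryTree d) F t) :
    v ∉ burn (completeBinaryTree d) F (t + 1) := by
  intro hv
  rw [burn] at hv
  simp only [Finset.mem_union, Finset.mem_sdiff, nbhd, Finset.mem_filter, Finset.mem_univ,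
    true_and] at hv
  rcases hv with h | ⟨-, u, hu, hadj⟩
  · tauto
  · rcases hnb u hadj with h' | h' <;> tauto

/-- Clearing a vertex: if the vertex with heap index `j`, its two (possible) children
and its parent are all covered at step `t+1`, then `j` is clear at time `t+1`. -/
lemma clear_at {d F} (t j : ℕ) (hself : covAt d F t j) (hc1 : covAt d F t (2 * j))
    (hc2 : covAt d F t (2 * j + 1)) (hp : covAt d F t (j / 2)) : clearN d F (t + 1) j := by
  intro v hv
  apply burn_succ_not_mem (hself v hv)
  intro u hadj
  rcases adj_opts hadj with h | h | h | h
  · exact hc1 u (by omega)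
  · exact hc2 u (by omega)
  · exact hp u (by omega)
  · exact hp u (by omega)

/-- Holding a clear region: a clear set of heap indices all of whose outside
neighbours are covered stays clear. -/
lemma hold_step {d F} (t : ℕ) (A : Set ℕ) (hA : ∀ j ∈ A, clearN d F t j)
    (hbd : ∀ j ∈ A, ∀ u : ℕ, (u = 2 * j ∨ u = 2 * j + 1 ∨ j = 2 * u ∨ j = 2 * u + 1) →
      u ∉ A → covAt d F t u) :
    ∀ j ∈ A, clearN d F (t + 1) j := by
  intro j hj v hv
  apply burn_succ_not_mem (Or.inr (hA j hj v hv))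
  intro u hadj
  by_cases hu : ((u : ℕ) + 1) ∈ A
  · exact Or.inr (hA _ hu u rfl)
  · have h := adj_opts hadj
    exact hbd j hj ((u : ℕ) + 1) (by omega) hu u rfl




section B1
variable (d : ℕ)
lemma Fwf1_0 (r : ℕ) : Fwf d 1 r 0 = vmap d (2 * r) ∪ vmap d r := by
  rw [Fwf, if_pos rfl]
lemma Fwf1_1 (r : ℕ) : Fwf d 1 r 1 = vmap d (2 * r + 1) ∪ vmap d r := by
  rw [Fwf, if_neg one_ne_zero, if_pos rfl]
lemma Fwf1_2 (r : ℕ) : Fwf d 1 r 2 = vmap d r := by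
  rw [Fwf, if_neg (by omega), if_neg (by omega)]
end B1

/-- Statement: the weak strategy for the height-`h` subtree rooted at `r` clears it. -/
def WeakS (d : ℕ) (F : ℕ → Finset (Fin (2 ^ (d + 1) - 1))) (h : ℕ) : Prop :=
  ∀ r t₀, 2 ^ d ≤ r * 2 ^ h → (r + 1) * 2 ^ h ≤ 2 ^ (d + 1) →
  (∀ i, i < Lw h → Fwf d h r i ⊆ F (t₀ + i + 1)) →
  (∀ i, pw h ≤ i + 1 → i + 1 ≤ Lw h → covAt d F (t₀ + i) (r / 2)) →
  ∀ j, desc j r → clearN d F (t₀ + Lw h) j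

/-- Statement: the strong strategy clears its subtree, and its root is clear at all
times from its clearing step on. -/
def StrongS (d : ℕ) (F : ℕ → Finset (Fin (2 ^ (d + 1) - 1))) (h : ℕ) : Prop :=
  ∀ r t₀, 2 ^ d ≤ r * 2 ^ h → (r + 1) * 2 ^ h ≤ 2 ^ (d + 1) →
  (∀ i, i < Ls h → Fsf d h r i ⊆ F (t₀ + i + 1)) →
  ∀ I, I ≤ Ls h →
  (∀ i, ps h ≤ i + 1 → i + 1 ≤ I → covAt d F (t₀ + i) (r / 2)) →
  (∀ i, ps h ≤ i → i ≤ I → clearN d F (t₀ + i) r) ∧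
  (I = Ls h → ∀ j, desc j r → clearN d F (t₀ + I) j)

section Main
variable (d : ℕ) (F : ℕ → Finset (Fin (2 ^ (d + 1) - 1)))

lemma weak0 : WeakS d F 0 := by
  intro r t₀ hr hr2 hsub hpar j hj
  simp only [pow_zero, mul_one] at hr hr2
  have h2 : (2:ℕ) ^ (d + 1) = 2 ^ d * 2 := pow_succ 2 d
  have hL : Lw 0 = 1 := by simp only [Lw]
  rw [hL]
  rcases desc_split.mp hj with rfl | hj2 | hj2
  · apply clear_at t₀
    · apply covAt_of_F
      have hs := hsub 0 (by omega)
      rw [Fwf] at hs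
      rwa [show t₀ + 0 + 1 = t₀ + 1 by omega] at hs
    · exact covAt_of_big (by omega)
    · exact covAt_of_big (by omega)
    · have := hpar 0 (by simp only [pw]; omega) (by omega)
      rwa [show t₀ + 0 = t₀ by omega] at this
  · exact clearN_of_big (by have := desc_le hj2; omega)
  · exact clearN_of_big (by have := desc_le hj2; omega)

lemma strong0 : StrongS d F 0 := by
  intro r t₀ hr hr2 hsub I hI hpar
  simp only [pow_zero, mul_one] at hr hr2
  have h2 : (2:ℕ) ^ (d + 1) = 2 ^ d * 2 := pow_succ 2 d
  have hL : Ls 0 = 1 := by simp only [Ls]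
  have hps0 : ps 0 = 1 := by simp only [ps]
  rw [hL] at hI
  have key : 1 ≤ I → clearN d F (t₀ + 1) r := by
    intro h1
    apply clear_at t₀
    · apply covAt_of_F
      have hs := hsub 0 (by omega)
      rw [Fsf] at hs
      rwa [show t₀ + 0 + 1 = t₀ + 1 by omega] at hs
    · exact covAt_of_big (by omega)
    · exact covAt_of_big (by omega)
    · have := hpar 0 (by omega) (by omega)
      rwa [show t₀ + 0 = t₀ by omega] at this
  constructor
  · intro i h1 h2i
    rw [hps0] at h1
    have : i = 1 := by omega
    subst this
    exact key (by omega)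
  · intro hIL j hj
    rw [hL] at hIL
    subst hIL
    rcases desc_split.mp hj with rfl | hj2 | hj2
    · exact key (by omega)
    · exact clearN_of_big (by have := desc_le hj2; omega)
    · exact clearN_of_big (by have := desc_le hj2; omega)

lemma weak1 : WeakS d F 1 := by
  intro r t₀ hr hr2 hsub hpar j hj
  have h2 : (2:ℕ) ^ (d + 1) = 2 ^ d * 2 := pow_succ 2 d
  have hone : (1:ℕ) ≤ 2 ^ d := Nat.one_le_two_pow
  have hL : Lw 1 = 3 := by simp only [Lw]
  have hpw1 : pw 1 = 3 := by simp only [pw]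
  rw [pow_one] at hr hr2
  rw [hL]
  have hrpos : 1 ≤ r := by
    rcases Nat.eq_zero_or_pos r with rfl | h
    · omega
    · exact h
  have hs0 := hsub 0 (by omega)
  rw [Fwf1_0, show t₀ + 0 + 1 = t₀ + 1 by omega] at hs0
  have hs1 := hsub 1 (by omega)
  rw [Fwf1_1, show t₀ + 1 + 1 = t₀ + 1 + 1 by omega] at hs1
  have hs2 := hsub 2 (by omega)
  rw [Fwf1_2] at hs2
  -- step 1 : the left leaf 2r clears
  have c1 : clearN d F (t₀ + 1) (2 * r) := by
    apply clear_at t₀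
    · exact covAt_of_F (Finset.Subset.trans Finset.subset_union_left hs0)
    · exact covAt_of_big (by omega)
    · exact covAt_of_big (by omega)
    · rw [show 2 * r / 2 = r by omega]
      exact covAt_of_F (Finset.Subset.trans Finset.subset_union_right hs0)
  -- step 2 : the right leaf 2r+1 clears, left leaf is held
  have c2 : clearN d F (t₀ + 1 + 1) (2 * r + 1) := by
    apply clear_at (t₀ + 1)
    · exact covAt_of_F (Finset.Subset.trans Finset.subset_union_left hs1)
    · exact covAt_of_big (by omega)
    · exact covAt_of_big (by omega)
    · rw [show (2 * r + 1) / 2 = r by omega]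
      exact covAt_of_F (Finset.Subset.trans Finset.subset_union_right hs1)
  have c1' : clearN d F (t₀ + 1 + 1) (2 * r) := by
    apply clear_at (t₀ + 1)
    · exact covAt_of_clear c1
    · exact covAt_of_big (by omega)
    · exact covAt_of_big (by omega)
    · rw [show 2 * r / 2 = r by omega]
      exact covAt_of_F (Finset.Subset.trans Finset.subset_union_right hs1)
  -- step 3 : the root clears, leaves are held
  have c3 : clearN d F (t₀ + 1 + 1 + 1) r := by
    apply clear_at (t₀ + 1 + 1)
    · exact covAt_of_F hs2
    · exact covAt_of_clear c1'
    · exact covAt_of_clear c2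
    · have := hpar 2 (by omega) (by omega)
      rwa [show t₀ + 2 = t₀ + 1 + 1 by omega] at this
  have c1'' : clearN d F (t₀ + 1 + 1 + 1) (2 * r) := by
    apply clear_at (t₀ + 1 + 1)
    · exact covAt_of_clear c1'
    · exact covAt_of_big (by omega)
    · exact covAt_of_big (by omega)
    · rw [show 2 * r / 2 = r by omega]
      exact covAt_of_F hs2
  have c2'' : clearN d F (t₀ + 1 + 1 + 1) (2 * r + 1) := by
    apply clear_at (t₀ + 1 + 1)
    · exact covAt_of_clear c2
    · exact covAt_of_big (by omega)
    · exact covAt_of_big (by omega)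
    · rw [show (2 * r + 1) / 2 = r by omega]
      exact covAt_of_F hs2
  rw [show t₀ + 3 = t₀ + 1 + 1 + 1 by omega]
  rcases desc_split.mp hj with rfl | hj2 | hj2
  · exact c3
  · rcases desc_split.mp hj2 with rfl | hj3 | hj3
    · exact c1''
    · exact clearN_of_big (by have := desc_le hj3; omega)
    · exact clearN_of_big (by have := desc_le hj3; omega)
  · rcases desc_split.mp hj2 with rfl | hj3 | hj3
    · exact c2''
    · exact clearN_of_big (by have := desc_le hj3; omega)
    · exact clearN_of_big (by have := desc_le hj3; omega)

end Main

section Main2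
variable (d : ℕ) (F : ℕ → Finset (Fin (2 ^ (d + 1) - 1)))

lemma strong_succ (h : ℕ) (IHw : WeakS d F h) (IHs : StrongS d F h) : StrongS d F (h + 1) := by
  intro r t₀ hr hr2 hsub I hI hpar
  have hLs : Ls (h + 1) = Lw h + 1 + Ls h := by simp only [Ls]
  have hps : ps (h + 1) = Lw h + 1 := by simp only [ps]
  have h2 : (2:ℕ) ^ (h + 1) = 2 ^ h * 2 := pow_succ 2 h
  have hone : (1:ℕ) ≤ 2 ^ h := Nat.one_le_two_pow
  rw [show r * 2 ^ (h + 1) = 2 * r * 2 ^ h by rw [h2]; ring] at hr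
  rw [show (r + 1) * 2 ^ (h + 1) = (2 * r + 2) * 2 ^ h by rw [h2]; ring] at hr2
  have hrpos : 1 ≤ r := by
    rcases Nat.eq_zero_or_pos r with rfl | h'
    · simp only [Nat.mul_zero, Nat.zero_mul] at hr
      have : (1:ℕ) ≤ 2 ^ d := Nat.one_le_two_pow
      omega
    · exact h'
  have hr2' : (2 * r + 1) * 2 ^ h ≤ 2 ^ (d + 1) :=
    le_trans (Nat.mul_le_mul_right _ (by omega)) hr2
  have hr3a : 2 ^ d ≤ (2 * r + 1) * 2 ^ h :=
    le_trans hr (Nat.mul_le_mul_right _ (by omega))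
  -- Phase 1 : weak strategy clears the subtree of the left child 2r, while r is guarded
  have hsub1 : ∀ i, i < Lw h → Fwf d h (2 * r) i ⊆ F (t₀ + i + 1) := by
    intro i hi
    have hs := hsub i (by omega)
    rw [Fsf_p1 d r hi] at hs
    exact Finset.Subset.trans Finset.subset_union_left hs
  have hpar1 : ∀ i, pw h ≤ i + 1 → i + 1 ≤ Lw h → covAt d F (t₀ + i) (2 * r / 2) := by
    intro i _ hi2
    rw [show 2 * r / 2 = r by omega]
    apply covAt_of_F
    have hs := hsub i (by omega)
    exact Finset.Subset.trans (vmap_subset_Fsf d (h + 1) r i (by omega)) hs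
  have W1 : ∀ j, desc j (2 * r) → clearN d F (t₀ + Lw h) j :=
    IHw (2 * r) t₀ hr hr2' hsub1 hpar1
  -- the strategy set at the clearing step of r
  have hsP2 := hsub (Lw h) (by omega)
  rw [Fsf_p2] at hsP2
  -- Pack : from step Lw h + 1 on, r and the left subtree are clear
  have Pack : ∀ i, i ≤ I → Lw h + 1 ≤ i →
      ∀ j, (j = r ∨ desc j (2 * r)) → clearN d F (t₀ + i) j := by
    intro i
    induction i using Nat.strong_induction_on with
    | _ i ih =>
      intro hiI hilb
      rcases Nat.eq_or_lt_of_le hilb with heq | hlt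
      · -- base : the clearing step of r
        subst heq
        intro j hj
        rw [show t₀ + (Lw h + 1) = t₀ + Lw h + 1 by omega]
        rcases hj with rfl | hj
        · apply clear_at (t₀ + Lw h)
          · exact covAt_of_F (Finset.Subset.trans Finset.subset_union_left hsP2)
          · exact covAt_of_clear (W1 (2 * j) (desc_refl _))
          · exact covAt_of_F (Finset.Subset.trans Finset.subset_union_right hsP2)
          · exact hpar (Lw h) (by omega) (by omega)
        · refine hold_step (t₀ + Lw h) {j' | desc j' (2 * r)} (fun j' hj' => W1 j' hj') ?_ j hj
          intro j' hj' u hadj hu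
          obtain ⟨-, hu2⟩ := bdry1 (by omega) hj' hadj hu
          rw [hu2, show 2 * r / 2 = r by omega]
          exact covAt_of_F (Finset.Subset.trans Finset.subset_union_left hsP2)
      · -- holding step
        obtain ⟨i₀, rfl⟩ : ∃ i₀, i = i₀ + 1 := ⟨i - 1, by omega⟩
        intro j hj
        rw [show t₀ + (i₀ + 1) = t₀ + i₀ + 1 by omega]
        refine hold_step (t₀ + i₀) {j' | j' = r ∨ desc j' (2 * r)}
          (fun j' hj' => ih i₀ (by omega) (by omega) (by omega) j' hj') ?_ j hj
        intro j' hj' u hadj hu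
        rcases bdry2 hrpos hj' hadj hu with hb | hb
        · subst hb
          exact hpar i₀ (by omega) (by omega)
        · subst hb
          by_cases hc : i₀ - (Lw h + 1) + 1 ≤ ps h
          · apply covAt_of_F
            have hv := vmap_subset_Fsf d h (2 * r + 1) (i₀ - (Lw h + 1)) hc
            have hs := hsub i₀ (by omega)
            rw [show i₀ = Lw h + 1 + (i₀ - (Lw h + 1)) by omega, Fsf_p3] at hs
            refine Finset.Subset.trans hv (by
              rwa [show t₀ + (Lw h + 1 + (i₀ - (Lw h + 1))) + 1 = t₀ + i₀ + 1 by omega] at hs)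
          · -- use the strong IH for the right child
            have hsubS : ∀ k, k < Ls h →
                Fsf d h (2 * r + 1) k ⊆ F (t₀ + (Lw h + 1) + k + 1) := by
              intro k hk
              have hs := hsub (Lw h + 1 + k) (by omega)
              rw [Fsf_p3] at hs
              rwa [show t₀ + (Lw h + 1 + k) + 1 = t₀ + (Lw h + 1) + k + 1 by omega] at hs
            have hparS : ∀ k, ps h ≤ k + 1 → k + 1 ≤ i₀ - (Lw h + 1) →
                covAt d F (t₀ + (Lw h + 1) + k) ((2 * r + 1) / 2) := by
              intro k _ hk2
              rw [show (2 * r + 1) / 2 = r by omega]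
              apply covAt_of_clear
              have := ih (Lw h + 1 + k) (by omega) (by omega) (by omega) r (Or.inl rfl)
              rwa [show t₀ + (Lw h + 1 + k) = t₀ + (Lw h + 1) + k by omega] at this
            have hSS := (IHs (2 * r + 1) (t₀ + (Lw h + 1)) hr3a (by
                rwa [show (2 * r + 1 + 1) * 2 ^ h = (2 * r + 2) * 2 ^ h by ring])
              hsubS (i₀ - (Lw h + 1)) (by omega) hparS).1 (i₀ - (Lw h + 1)) (by omega) le_rfl
            apply covAt_of_clear
            rwa [show t₀ + (Lw h + 1) + (i₀ - (Lw h + 1)) = t₀ + i₀ by omega] at hSS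
  refine ⟨fun i h1 h2i => Pack i h2i (by omega) r (Or.inl rfl), ?_⟩
  intro hIL j hj
  subst hIL
  have hIlb : Lw h + 1 ≤ Ls (h + 1) := by have := one_le_Ls h; omega
  rcases desc_split.mp hj with rfl | hj2 | hj2
  · exact Pack (Ls (h + 1)) le_rfl hIlb _ (Or.inl rfl)
  · exact Pack (Ls (h + 1)) le_rfl hIlb j (Or.inr hj2)
  · -- the right subtree is cleared by the strong sub-strategy
    have hsubS : ∀ k, k < Ls h →
        Fsf d h (2 * r + 1) k ⊆ F (t₀ + (Lw h + 1) + k + 1) := by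
      intro k hk
      have hs := hsub (Lw h + 1 + k) (by omega)
      rw [Fsf_p3] at hs
      rwa [show t₀ + (Lw h + 1 + k) + 1 = t₀ + (Lw h + 1) + k + 1 by omega] at hs
    have hparS : ∀ k, ps h ≤ k + 1 → k + 1 ≤ Ls h →
        covAt d F (t₀ + (Lw h + 1) + k) ((2 * r + 1) / 2) := by
      intro k _ hk2
      rw [show (2 * r + 1) / 2 = r by omega]
      apply covAt_of_clear
      have := Pack (Lw h + 1 + k) (by omega) (by omega) r (Or.inl rfl)
      rwa [show t₀ + (Lw h + 1 + k) = t₀ + (Lw h + 1) + k by omega] at this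
    have hSS := (IHs (2 * r + 1) (t₀ + (Lw h + 1)) hr3a (by
        rwa [show (2 * r + 1 + 1) * 2 ^ h = (2 * r + 2) * 2 ^ h by ring])
      hsubS (Ls h) le_rfl hparS).2 rfl j hj2
    rwa [show t₀ + (Lw h + 1) + Ls h = t₀ + Ls (h + 1) by omega] at hSS

end Main2

section Main3
variable (d : ℕ) (F : ℕ → Finset (Fin (2 ^ (d + 1) - 1)))

lemma weak_succ2 (h : ℕ) (IHw : WeakS d F h) (IHs : StrongS d F (h + 1)) :
    WeakS d F (h + 2) := by
  intro r t₀ hr hr2 hsub hpar j hj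
  have hLw : Lw (h + 2) = 2 * Lw h + 2 + Ls (h + 1) := by simp only [Lw]
  have hpw : pw (h + 2) = 2 * Lw h + 2 := by simp only [pw]
  have hps : ps (h + 1) = Lw h + 1 := by simp only [ps]
  have hLs1 := one_le_Ls (h + 1)
  have hLw1 := one_le_Lw h
  rw [show r * 2 ^ (h + 2) = 4 * r * 2 ^ h by ring] at hr
  rw [show (r + 1) * 2 ^ (h + 2) = (4 * r + 4) * 2 ^ h by ring] at hr2
  have hrpos : 1 ≤ r := by
    rcases Nat.eq_zero_or_pos r with rfl | h'
    · simp only [Nat.mul_zero, Nat.zero_mul] at hr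
      have : (1:ℕ) ≤ 2 ^ d := Nat.one_le_two_pow
      omega
    · exact h'
  have r1b : (4 * r + 1) * 2 ^ h ≤ 2 ^ (d + 1) :=
    le_trans (Nat.mul_le_mul_right _ (by omega)) hr2
  have r2a : 2 ^ d ≤ (4 * r + 1) * 2 ^ h :=
    le_trans hr (Nat.mul_le_mul_right _ (by omega))
  have r2b : (4 * r + 1 + 1) * 2 ^ h ≤ 2 ^ (d + 1) :=
    le_trans (Nat.mul_le_mul_right _ (by omega)) hr2
  have r3a : 2 ^ d ≤ (2 * r + 1) * 2 ^ (h + 1) := by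
    rw [show (2 * r + 1) * 2 ^ (h + 1) = (4 * r + 2) * 2 ^ h by ring]
    exact le_trans hr (Nat.mul_le_mul_right _ (by omega))
  have r3b : (2 * r + 1 + 1) * 2 ^ (h + 1) ≤ 2 ^ (d + 1) := by
    rw [show (2 * r + 1 + 1) * 2 ^ (h + 1) = (4 * r + 4) * 2 ^ h by ring]
    exact hr2
  -- Phase 1 : clear the subtree of 4r, guarding 2r
  have hsubP1 : ∀ i, i < Lw h → Fwf d h (4 * r) i ⊆ F (t₀ + i + 1) := by
    intro i hi
    have hs := hsub i (by omega)
    rw [Fwf_p1 d r hi] at hs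
    exact Finset.Subset.trans Finset.subset_union_left hs
  have hparP1 : ∀ i, pw h ≤ i + 1 → i + 1 ≤ Lw h → covAt d F (t₀ + i) (4 * r / 2) := by
    intro i _ hi2
    rw [show 4 * r / 2 = 2 * r by omega]
    apply covAt_of_F
    have hs := hsub i (by omega)
    rw [Fwf_p1 d r (by omega)] at hs
    exact Finset.Subset.trans Finset.subset_union_right hs
  have W1 : ∀ j, desc j (4 * r) → clearN d F (t₀ + Lw h) j :=
    IHw (4 * r) t₀ hr r1b hsubP1 hparP1
  -- Hold the subtree of 4r during phase 2
  have H1 : ∀ k, k ≤ Lw h → ∀ j', desc j' (4 * r) → clearN d F (t₀ + Lw h + k) j' := by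
    intro k
    induction k with
    | zero => intro _ j' hj'; rw [show t₀ + Lw h + 0 = t₀ + Lw h by omega]; exact W1 j' hj'
    | succ k ihk =>
      intro hk j' hj'
      rw [show t₀ + Lw h + (k + 1) = t₀ + Lw h + k + 1 by omega]
      refine hold_step (t₀ + Lw h + k) {j'' | desc j'' (4 * r)} (fun j'' hj'' => ihk (by omega) j'' hj'') ?_ j' hj'
      intro j'' hj'' u hadj hu
      obtain ⟨-, hu2⟩ := bdry1 (by omega) hj'' hadj hu
      rw [hu2, show 4 * r / 2 = 2 * r by omega]
      apply covAt_of_F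
      have hs := hsub (Lw h + k) (by omega)
      rw [Fwf_p2 d r (show k < Lw h by omega)] at hs
      rw [show t₀ + (Lw h + k) + 1 = t₀ + Lw h + k + 1 by omega] at hs
      exact Finset.Subset.trans Finset.subset_union_right hs
  -- Phase 2 : clear the subtree of 4r+1, guarding 2r
  have hsubP2 : ∀ i, i < Lw h → Fwf d h (4 * r + 1) i ⊆ F (t₀ + Lw h + i + 1) := by
    intro i hi
    have hs := hsub (Lw h + i) (by omega)
    rw [Fwf_p2 d r hi] at hs
    rw [show t₀ + (Lw h + i) + 1 = t₀ + Lw h + i + 1 by omega] at hs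
    exact Finset.Subset.trans Finset.subset_union_left hs
  have hparP2 : ∀ i, pw h ≤ i + 1 → i + 1 ≤ Lw h →
      covAt d F (t₀ + Lw h + i) ((4 * r + 1) / 2) := by
    intro i _ hi2
    rw [show (4 * r + 1) / 2 = 2 * r by omega]
    apply covAt_of_F
    have hs := hsub (Lw h + i) (by omega)
    rw [Fwf_p2 d r (show i < Lw h by omega)] at hs
    rw [show t₀ + (Lw h + i) + 1 = t₀ + Lw h + i + 1 by omega] at hs
    exact Finset.Subset.trans Finset.subset_union_right hs
  have W2 : ∀ j', desc j' (4 * r + 1) → clearN d F (t₀ + Lw h + Lw h) j' :=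
    IHw (4 * r + 1) (t₀ + Lw h) r2a r2b hsubP2 hparP2
  have W2' : ∀ j', desc j' (4 * r + 1) → clearN d F (t₀ + 2 * Lw h) j' := by
    intro j' hj'
    have := W2 j' hj'
    rwa [show t₀ + Lw h + Lw h = t₀ + 2 * Lw h by omega] at this
  have H1' : ∀ j', desc j' (4 * r) → clearN d F (t₀ + 2 * Lw h) j' := by
    intro j' hj'
    have := H1 (Lw h) le_rfl j' hj'
    rwa [show t₀ + Lw h + Lw h = t₀ + 2 * Lw h by omega] at this
  -- Phase 3 : clear 2r
  have hs3 := hsub (2 * Lw h) (by omega)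
  rw [Fwf_p3] at hs3
  have C3u1 : clearN d F (t₀ + 2 * Lw h + 1) (2 * r) := by
    apply clear_at (t₀ + 2 * Lw h)
    · exact covAt_of_F (Finset.Subset.trans Finset.subset_union_left hs3)
    · rw [show 2 * (2 * r) = 4 * r by ring]
      exact covAt_of_clear (H1' (4 * r) (desc_refl _))
    · rw [show 2 * (2 * r) + 1 = 4 * r + 1 by ring]
      exact covAt_of_clear (W2' (4 * r + 1) (desc_refl _))
    · rw [show 2 * r / 2 = r by omega]
      exact covAt_of_F (Finset.Subset.trans Finset.subset_union_right hs3)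
  have C3hold : ∀ j', desc j' (4 * r) ∨ desc j' (4 * r + 1) →
      clearN d F (t₀ + 2 * Lw h + 1) j' := by
    intro j' hj'
    refine hold_step (t₀ + 2 * Lw h) {j'' | desc j'' (4 * r) ∨ desc j'' (4 * r + 1)}
      (fun j'' hj'' => by rcases hj'' with h' | h'; exacts [H1' j'' h', W2' j'' h']) ?_ j' hj'
    intro j'' hj'' u hadj hu
    rcases hj'' with h' | h'
    · obtain ⟨-, hu2⟩ := bdry1 (by omega) h' hadj (fun hx => hu (Or.inl hx))
      rw [hu2, show 4 * r / 2 = 2 * r by omega]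
      exact covAt_of_F (Finset.Subset.trans Finset.subset_union_left hs3)
    · obtain ⟨-, hu2⟩ := bdry1 (by omega) h' hadj (fun hx => hu (Or.inr hx))
      rw [hu2, show (4 * r + 1) / 2 = 2 * r by omega]
      exact covAt_of_F (Finset.Subset.trans Finset.subset_union_left hs3)
  have K3 : ∀ j', desc j' (2 * r) → clearN d F (t₀ + 2 * Lw h + 1) j' := by
    intro j' hj'
    rcases desc_split.mp hj' with rfl | hx | hx
    · exact C3u1
    · exact C3hold j' (Or.inl (by rwa [show 2 * (2 * r) = 4 * r by ring] at hx))
    · exact C3hold j' (Or.inr (by rwa [show 2 * (2 * r) + 1 = 4 * r + 1 by ring] at hx))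
  -- Phase 4 : clear r
  have hs4 := hsub (2 * Lw h + 1) (by omega)
  rw [Fwf_p4] at hs4
  rw [show t₀ + (2 * Lw h + 1) + 1 = t₀ + 2 * Lw h + 1 + 1 by omega] at hs4
  have C4 : ∀ j', (j' = r ∨ desc j' (2 * r)) → clearN d F (t₀ + 2 * Lw h + 1 + 1) j' := by
    intro j' hj'
    rcases hj' with rfl | hj'
    · apply clear_at (t₀ + 2 * Lw h + 1)
      · exact covAt_of_F (Finset.Subset.trans Finset.subset_union_left hs4)
      · exact covAt_of_clear (K3 (2 * j') (desc_refl _))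
      · exact covAt_of_F (Finset.Subset.trans Finset.subset_union_right hs4)
      · have := hpar (2 * Lw h + 1) (by omega) (by omega)
        rwa [show t₀ + (2 * Lw h + 1) = t₀ + 2 * Lw h + 1 by omega] at this
    · refine hold_step (t₀ + 2 * Lw h + 1) {j'' | desc j'' (2 * r)}
        (fun j'' hj'' => K3 j'' hj'') ?_ j' hj'
      intro j'' hj'' u hadj hu
      obtain ⟨-, hu2⟩ := bdry1 (by omega) hj'' hadj hu
      rw [hu2, show 2 * r / 2 = r by omega]
      exact covAt_of_F (Finset.Subset.trans Finset.subset_union_left hs4)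
  -- Phase 5 : strong strategy for 2r+1, holding r and the subtree of 2r
  have Pack : ∀ i, i ≤ Lw (h + 2) → 2 * Lw h + 2 ≤ i →
      ∀ j', (j' = r ∨ desc j' (2 * r)) → clearN d F (t₀ + i) j' := by
    intro i
    induction i using Nat.strong_induction_on with
    | _ i ih =>
      intro hiU hilb
      rcases Nat.eq_or_lt_of_le hilb with heq | hlt
      · subst heq
        intro j' hj'
        rw [show t₀ + (2 * Lw h + 2) = t₀ + 2 * Lw h + 1 + 1 by omega]
        exact C4 j' hj'
      · obtain ⟨i₀, rfl⟩ : ∃ i₀, i = i₀ + 1 := ⟨i - 1, by omega⟩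
        intro j' hj'
        rw [show t₀ + (i₀ + 1) = t₀ + i₀ + 1 by omega]
        refine hold_step (t₀ + i₀) {j'' | j'' = r ∨ desc j'' (2 * r)}
          (fun j'' hj'' => ih i₀ (by omega) (by omega) (by omega) j'' hj'') ?_ j' hj'
        intro j'' hj'' u hadj hu
        rcases bdry2 hrpos hj'' hadj hu with hb | hb
        · subst hb
          exact hpar i₀ (by omega) (by omega)
        · subst hb
          by_cases hc : i₀ - (2 * Lw h + 2) + 1 ≤ ps (h + 1)
          · apply covAt_of_F
            have hv := vmap_subset_Fsf d (h + 1) (2 * r + 1) (i₀ - (2 * Lw h + 2)) hc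
            have hs := hsub i₀ (by omega)
            rw [show i₀ = 2 * Lw h + 2 + (i₀ - (2 * Lw h + 2)) by omega, Fwf_p5] at hs
            refine Finset.Subset.trans hv (by
              rwa [show t₀ + (2 * Lw h + 2 + (i₀ - (2 * Lw h + 2))) + 1 = t₀ + i₀ + 1 by omega] at hs)
          · have hsubS : ∀ k, k < Ls (h + 1) →
                Fsf d (h + 1) (2 * r + 1) k ⊆ F (t₀ + (2 * Lw h + 2) + k + 1) := by
              intro k hk
              have hs := hsub (2 * Lw h + 2 + k) (by omega)
              rw [Fwf_p5] at hs
              rwa [show t₀ + (2 * Lw h + 2 + k) + 1 = t₀ + (2 * Lw h + 2) + k + 1 by omega] at hs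
            have hparS : ∀ k, ps (h + 1) ≤ k + 1 → k + 1 ≤ i₀ - (2 * Lw h + 2) →
                covAt d F (t₀ + (2 * Lw h + 2) + k) ((2 * r + 1) / 2) := by
              intro k _ hk2
              rw [show (2 * r + 1) / 2 = r by omega]
              apply covAt_of_clear
              have := ih (2 * Lw h + 2 + k) (by omega) (by omega) (by omega) r (Or.inl rfl)
              rwa [show t₀ + (2 * Lw h + 2 + k) = t₀ + (2 * Lw h + 2) + k by omega] at this
            have hSS := (IHs (2 * r + 1) (t₀ + (2 * Lw h + 2)) r3a r3b hsubS
              (i₀ - (2 * Lw h + 2)) (by omega) hparS).1 (i₀ - (2 * Lw h + 2)) (by omega) le_rfl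
            apply covAt_of_clear
            rwa [show t₀ + (2 * Lw h + 2) + (i₀ - (2 * Lw h + 2)) = t₀ + i₀ by omega] at hSS
  rcases desc_split.mp hj with rfl | hj2 | hj2
  · exact Pack (Lw (h + 2)) le_rfl (by omega) _ (Or.inl rfl)
  · exact Pack (Lw (h + 2)) le_rfl (by omega) j (Or.inr hj2)
  · have hsubS : ∀ k, k < Ls (h + 1) →
        Fsf d (h + 1) (2 * r + 1) k ⊆ F (t₀ + (2 * Lw h + 2) + k + 1) := by
      intro k hk
      have hs := hsub (2 * Lw h + 2 + k) (by omega)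
      rw [Fwf_p5] at hs
      rwa [show t₀ + (2 * Lw h + 2 + k) + 1 = t₀ + (2 * Lw h + 2) + k + 1 by omega] at hs
    have hparS : ∀ k, ps (h + 1) ≤ k + 1 → k + 1 ≤ Ls (h + 1) →
        covAt d F (t₀ + (2 * Lw h + 2) + k) ((2 * r + 1) / 2) := by
      intro k _ hk2
      rw [show (2 * r + 1) / 2 = r by omega]
      apply covAt_of_clear
      have := Pack (2 * Lw h + 2 + k) (by omega) (by omega) r (Or.inl rfl)
      rwa [show t₀ + (2 * Lw h + 2 + k) = t₀ + (2 * Lw h + 2) + k by omega] at this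
    have hSS := (IHs (2 * r + 1) (t₀ + (2 * Lw h + 2)) r3a r3b hsubS
      (Ls (h + 1)) le_rfl hparS).2 rfl j hj2
    rwa [show t₀ + (2 * Lw h + 2) + Ls (h + 1) = t₀ + Lw (h + 2) by omega] at hSS

end Main3
end BTreeFF
namespace BTreeFF

lemma main_all (d : ℕ) (F : ℕ → Finset (Fin (2 ^ (d + 1) - 1))) :
    ∀ h, WeakS d F h ∧ StrongS d F h := by
  intro h
  induction h using Nat.strong_induction_on with
  | _ h ih =>
    match h with
    | 0 => exact ⟨weak0 d F, strong0 d F⟩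
    | 1 => exact ⟨weak1 d F, strong_succ d F 0 (weak0 d F) (strong0 d F)⟩
    | h + 2 =>
      have ihh := ih h (by omega)
      have ihh1 := ih (h + 1) (by omega)
      exact ⟨weak_succ2 d F h ihh.1 ihh1.2, strong_succ d F (h + 1) ihh1.1 ihh1.2⟩

end BTreeFF

/-- Upper bound on the firefighter number of complete binary trees:
`ffn 𝔅_d ≤ ⌈d / 2⌉ + 1` for `d ≥ 7`. -/
theorem ffn_completeBinaryTree_le (d : ℕ) (hd : 7 ≤ d) :
    ffn (completeBinaryTree d) ≤ (d + 1) / 2 + 1 := by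
  classical
  set F : ℕ → Finset (Fin (2 ^ (d + 1) - 1)) := fun t => BTreeFF.Fwf d d 1 (t - 1) with hF
  apply Nat.sInf_le
  refine ⟨BTreeFF.Lw d, F, fun i => (BTreeFF.card_strategies d d).1 1 (i - 1), ?_⟩
  have h2 : (2:ℕ) ^ (d + 1) = 2 ^ d * 2 := pow_succ 2 d
  have hw := (BTreeFF.main_all d F d).1 1 0 (by omega) (by omega) ?_ ?_
  · rw [Finset.eq_empty_iff_forall_notMem]
    intro v
    have hv := hw ((v : ℕ) + 1) (BTreeFF.desc_one (by omega)) v rfl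
    rwa [show 0 + BTreeFF.Lw d = BTreeFF.Lw d by omega] at hv
  · intro i hi
    rw [hF]
    simp only
    rw [show 0 + i + 1 - 1 = i by omega]
  · intro i _ _
    rw [show (1:ℕ) / 2 = 0 by omega]
    exact BTreeFF.covAt_zero
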